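/- Let ω, β ∈ ℝ, let V : ℝ² → ℝ, and let u : ℝ × ℝ² → ℂ be twice continuously differentiable. For t ∈ ℝ let A(t) be the rotation matrix A(t) = [[cos(ωt), sin(ωt)], [−sin(ωt), cos(ωt)]], and define ũ(t, x̃) := u(t, A(t)x̃). If u satisfies the rotating Gross–Pitaevskii equation i∂_t u + (1/2)Δu − V·u − β|u|²u + ω·L_z u = 0 at every point of ℝ × ℝ², where L_z u = −i(x ∂_y u − y ∂_x u), then ũ satisfies the rotation-free nonlinear Schrödinger equation with time-dependent potential: i∂_t ũ(t, x̃) + (1/2)Δ_{x̃} ũ(t, x̃) − V(A(t)x̃)·ũ(t, x̃) − β|ũ(t, x̃)|²ũ(t, x̃) = 0 at every point (t, x̃) ∈ ℝ × ℝ². -/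

import Mathlib

/-- Partial derivative in the first spatial variable. -/
noncomputable def pderivX (u : ℝ × ℝ → ℂ) (z : ℝ × ℝ) : ℂ :=
  deriv (fun x => u (x, z.2)) z.1

/-- Partial derivative in the second spatial variable. -/
noncomputable def pderivY (u : ℝ × ℝ → ℂ) (z : ℝ × ℝ) : ℂ :=
  deriv (fun y => u (z.1, y)) z.2

/-- The Laplacian `Δu = ∂²u/∂x² + ∂²u/∂y²` on `ℝ²`. -/
noncomputable def lap2 (u : ℝ × ℝ → ℂ) (z : ℝ × ℝ) : ℂ :=
  pderivX (pderivX u) z + pderivY (pderivY u) z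

/-- The `z`-component of the angular momentum operator `L_z u = −i(x ∂_y u − y ∂_x u)`. -/
noncomputable def Lz (u : ℝ × ℝ → ℂ) (z : ℝ × ℝ) : ℂ :=
  -Complex.I * ((z.1 : ℂ) * pderivY u z - (z.2 : ℂ) * pderivX u z)

/-- The rotation `A(t) = [[cos ωt, sin ωt], [−sin ωt, cos ωt]]` acting on `ℝ²`. -/
noncomputable def rot (ω t : ℝ) (z : ℝ × ℝ) : ℝ × ℝ :=
  (Real.cos (ω * t) * z.1 + Real.sin (ω * t) * z.2,
   -Real.sin (ω * t) * z.1 + Real.cos (ω * t) * z.2)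

/-!
Write `q = A(t)x̃`. Since `q̇ = ω(q₂, −q₁)`, the chain rule gives
`∂ₜũ = ∂ₜu + ω(q₂ ∂ₓu − q₁ ∂ᵧu)`, and `iω(q₂ ∂ₓu − q₁ ∂ᵧu) = ωL_z u`: the transport term created
by the moving frame is exactly the rotation term. The Laplacian is the trace of the Hessian
`Σᵢ D²u(eᵢ, eᵢ)`, which is unchanged when the orthonormal basis `eᵢ` is replaced by `A(t)eᵢ`, so
`Δ(u ∘ A(t)) = (Δu) ∘ A(t)`.
-/

open ContinuousLinearMap

section PartialDerivatives

variable {f : ℝ × ℝ → ℂ}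

theorem pderivX_eq_fderiv {z : ℝ × ℝ} (hf : DifferentiableAt ℝ f z) :
    pderivX f z = fderiv ℝ f z (1, 0) :=
  (hf.hasFDerivAt.comp_hasDerivAt z.1 ((hasDerivAt_id _).prodMk (hasDerivAt_const _ _))).deriv

theorem pderivY_eq_fderiv {z : ℝ × ℝ} (hf : DifferentiableAt ℝ f z) :
    pderivY f z = fderiv ℝ f z (0, 1) :=
  (hf.hasFDerivAt.comp_hasDerivAt z.2 ((hasDerivAt_const _ _).prodMk (hasDerivAt_id _))).deriv

theorem fderiv_apply_eq_pderiv {z : ℝ × ℝ} (hf : DifferentiableAt ℝ f z) (a b : ℝ) :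
    fderiv ℝ f z (a, b) = a * pderivX f z + b * pderivY f z := by
  have hab : ((a, b) : ℝ × ℝ) = a • ((1 : ℝ), (0 : ℝ)) + b • ((0 : ℝ), (1 : ℝ)) := by simp
  rw [hab, map_add, map_smul, map_smul, pderivX_eq_fderiv hf, pderivY_eq_fderiv hf,
    Complex.real_smul, Complex.real_smul]

theorem lap2_eq_fderiv_fderiv (hf : ContDiff ℝ 2 f) (z : ℝ × ℝ) :
    lap2 f z = fderiv ℝ (fderiv ℝ f) z (1, 0) (1, 0) + fderiv ℝ (fderiv ℝ f) z (0, 1) (0, 1) := by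
  have hf1 : Differentiable ℝ f := hf.differentiable (by norm_num)
  have hf2 : Differentiable ℝ (fderiv ℝ f) :=
    (hf.fderiv_right (m := 1) (by norm_num)).differentiable one_ne_zero
  have hX : pderivX f = fun w => fderiv ℝ f w (1, 0) := funext fun w => pderivX_eq_fderiv (hf1 w)
  have hY : pderivY f = fun w => fderiv ℝ f w (0, 1) := funext fun w => pderivY_eq_fderiv (hf1 w)
  rw [lap2, hX, hY, pderivX_eq_fderiv ((hf2 z).clm_apply (differentiableAt_const _)),
    pderivY_eq_fderiv ((hf2 z).clm_apply (differentiableAt_const _)),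
    fderiv_clm_apply (hf2 z) (differentiableAt_const _),
    fderiv_clm_apply (hf2 z) (differentiableAt_const _)]
  simp

end PartialDerivatives

theorem fderiv_fderiv_comp_clm_apply {E F G : Type*} [NormedAddCommGroup E] [NormedSpace ℝ E]
    [NormedAddCommGroup F] [NormedSpace ℝ F] [NormedAddCommGroup G] [NormedSpace ℝ G]
    {f : E → F} (hf : ContDiff ℝ 2 f) (L : G →L[ℝ] E) (z v w : G) :
    fderiv ℝ (fderiv ℝ (f ∘ L)) z v w = fderiv ℝ (fderiv ℝ f) (L z) (L v) (L w) := by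
  have hcomp := L.iteratedFDeriv_comp_right hf z (i := 2) le_rfl
  have h1 := iteratedFDeriv_two_apply (𝕜 := ℝ) (f ∘ L) z ![v, w]
  have h2 := iteratedFDeriv_two_apply (𝕜 := ℝ) f (L z) ![L v, L w]
  simp only [Matrix.cons_val_zero, Matrix.cons_val_one] at h1 h2
  rw [← h1, ← h2, hcomp, ContinuousMultilinearMap.compContinuousLinearMap_apply]
  congr 1
  ext i
  fin_cases i <;> rfl

noncomputable def rotCLM (ω t : ℝ) : (ℝ × ℝ) →L[ℝ] (ℝ × ℝ) :=
  (Real.cos (ω * t) • fst ℝ ℝ ℝ + Real.sin (ω * t) • snd ℝ ℝ ℝ).prod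
    (-Real.sin (ω * t) • fst ℝ ℝ ℝ + Real.cos (ω * t) • snd ℝ ℝ ℝ)

theorem coe_rotCLM (ω t : ℝ) : ⇑(rotCLM ω t) = rot ω t := by
  ext z <;> simp [rotCLM, rot]

theorem bilinear_trace_rot {M : Type*} [AddCommGroup M] [Module ℝ M]
    (D : (ℝ × ℝ) →ₗ[ℝ] (ℝ × ℝ) →ₗ[ℝ] M) (ω t : ℝ) :
    D (rot ω t (1, 0)) (rot ω t (1, 0)) + D (rot ω t (0, 1)) (rot ω t (0, 1))
      = D (1, 0) (1, 0) + D (0, 1) (0, 1) := by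
  have h1 : rot ω t (1, 0) = Real.cos (ω * t) • ((1 : ℝ), (0 : ℝ)) + (-Real.sin (ω * t)) • (0, 1) :=
    by simp [rot]
  have h2 : rot ω t (0, 1) = Real.sin (ω * t) • ((1 : ℝ), (0 : ℝ)) + Real.cos (ω * t) • (0, 1) :=
    by simp [rot]
  rw [h1, h2]
  simp only [map_add, map_smul, LinearMap.add_apply, LinearMap.smul_apply]
  linear_combination (norm := module)
    Real.sin_sq_add_cos_sq (ω * t) • (D (1, 0) (1, 0) + D (0, 1) (0, 1))

theorem lap2_comp_rot {f : ℝ × ℝ → ℂ} (hf : ContDiff ℝ 2 f) (ω t : ℝ) (z : ℝ × ℝ) :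
    lap2 (fun w => f (rot ω t w)) z = lap2 f (rot ω t z) := by
  have hfL : ContDiff ℝ 2 (f ∘ rotCLM ω t) := hf.comp (rotCLM ω t).contDiff
  rw [← coe_rotCLM, ← Function.comp_def, lap2_eq_fderiv_fderiv hfL, lap2_eq_fderiv_fderiv hf,
    fderiv_fderiv_comp_clm_apply hf, fderiv_fderiv_comp_clm_apply hf, coe_rotCLM]
  exact bilinear_trace_rot (fderiv ℝ (fderiv ℝ f) (rot ω t z)).toLinearMap₁₂ ω t

theorem hasDerivAt_apply_curve {E F : Type*} [NormedAddCommGroup E] [NormedSpace ℝ E]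
    [NormedAddCommGroup F] [NormedSpace ℝ F] {u : ℝ → E → F} {γ : ℝ → E} {γ' : E} {t : ℝ}
    (hu : DifferentiableAt ℝ (fun p : ℝ × E => u p.1 p.2) (t, γ t)) (hγ : HasDerivAt γ γ' t) :
    HasDerivAt (fun s => u s (γ s)) (deriv (fun s => u s (γ t)) t + fderiv ℝ (u t) (γ t) γ') t := by
  set D := fderiv ℝ (fun p : ℝ × E => u p.1 p.2) (t, γ t)
  have htime : deriv (fun s => u s (γ t)) t = D (1, 0) := by
    have h := hu.hasFDerivAt.comp_hasDerivAt t ((hasDerivAt_id t).prodMk (hasDerivAt_const t (γ t)))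
    exact h.deriv
  have hspace : fderiv ℝ (u t) (γ t) = D.comp (inr ℝ ℝ E) :=
    (hu.hasFDerivAt.comp (γ t) (hasFDerivAt_prodMk_right t (γ t))).fderiv
  have hsplit : ((1 : ℝ), γ') = ((1 : ℝ), (0 : E)) + ((0 : ℝ), γ') := by simp
  rw [htime, hspace, comp_apply, inr_apply, ← map_add, ← hsplit]
  exact hu.hasFDerivAt.comp_hasDerivAt t ((hasDerivAt_id t).prodMk hγ)

theorem hasDerivAt_rot (ω t : ℝ) (z : ℝ × ℝ) :
    HasDerivAt (fun s => rot ω s z) (ω * (rot ω t z).2, -(ω * (rot ω t z).1)) t := by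
  have hc := (Real.hasDerivAt_cos (ω * t)).comp t ((hasDerivAt_id t).const_mul ω)
  have hs := (Real.hasDerivAt_sin (ω * t)).comp t ((hasDerivAt_id t).const_mul ω)
  refine (((hc.mul_const z.1).add (hs.mul_const z.2)).prodMk
    ((hs.neg.mul_const z.1).add (hc.mul_const z.2))).congr_deriv ?_
  simp only [rot, Prod.ext_iff]
  constructor <;> ring

/-- If `u` solves the rotating Gross–Pitaevskii equation
`i∂ₜu + (1/2)Δu − Vu − β|u|²u + ωL_z u = 0`, then `ũ(t,x̃) = u(t, A(t)x̃)` solves the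
rotation-free nonlinear Schrödinger equation with the time-dependent potential
`V(A(t)x̃)`. -/
theorem gpe_rotating_frame (ω β : ℝ) (V : ℝ × ℝ → ℝ) (u : ℝ → ℝ × ℝ → ℂ)
    (hu : ContDiff ℝ 2 (fun p : ℝ × (ℝ × ℝ) => u p.1 p.2))
    (hgpe : ∀ (t : ℝ) (z : ℝ × ℝ),
      Complex.I * deriv (fun s => u s z) t
        + (1 / 2) * lap2 (u t) z
        - (V z : ℂ) * u t z
        - (β : ℂ) * (‖u t z‖ : ℂ) ^ 2 * u t z
        + (ω : ℂ) * Lz (u t) z = 0) :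
    ∀ (t : ℝ) (z : ℝ × ℝ),
      Complex.I * deriv (fun s => u s (rot ω s z)) t
        + (1 / 2) * lap2 (fun w => u t (rot ω t w)) z
        - (V (rot ω t z) : ℂ) * u t (rot ω t z)
        - (β : ℂ) * (‖u t (rot ω t z)‖ : ℂ) ^ 2 * u t (rot ω t z) = 0 := by
  intro t z
  set q := rot ω t z
  have hut : ContDiff ℝ 2 (u t) := hu.comp (contDiff_const.prodMk contDiff_id)
  have htime : deriv (fun s => u s (rot ω s z)) t
      = deriv (fun s => u s q) t + (ω * q.2 : ℝ) * pderivX (u t) q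
        + (-(ω * q.1) : ℝ) * pderivY (u t) q := by
    rw [(hasDerivAt_apply_curve (hu.differentiable (by norm_num) _) (hasDerivAt_rot ω t z)).deriv,
      fderiv_apply_eq_pderiv (hut.differentiable (by norm_num) q), add_assoc]
  rw [htime, lap2_comp_rot hut]
  have hq := hgpe t q
  simp only [Lz] at hq
  push_cast
  linear_combination hq
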